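/- Let G be a simple graph and let D be a divisor on G of rank r = r(D). For every vertex P of G there exists an effective divisor E of degree r + 1 with E(P) = 0 and |D − E| = ∅ (i.e., a proof for the rank of D not supported at P). -/

import Mathlib

open scoped Classical

/-- A graph: a finite connected multigraph with no loop edges, given by a symmetric
edge-multiplicity function on a finite nonempty vertex type. -/
structure Multigraph where
  V : Type
  [fintypeV : Fintype V]
  [decEqV : DecidableEq V]
  [nonemptyV : Nonempty V]
  adj : V → V → ℕ
  adj_symm : ∀ u v, adj u v = adj v u
  adj_loopless : ∀ v, adj v v = 0
  conn : ∀ u v, Relation.ReflTransGen (fun a b => adj a b ≠ 0) u v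

attribute [instance] Multigraph.fintypeV Multigraph.decEqV Multigraph.nonemptyV

namespace Multigraph

variable (G : Multigraph)

/-- A simple graph: no multiple edges and more than one vertex. -/
def Simple : Prop :=
  (∀ u v, G.adj u v ≤ 1) ∧ 1 < Fintype.card G.V

/-- The degree of a divisor. -/
def deg (D : G.V → ℤ) : ℤ := ∑ v, D v

/-- A divisor is effective if all its coefficients are nonnegative. -/
def Effective (D : G.V → ℤ) : Prop := ∀ v, 0 ≤ D v

/-- The Laplacian of an integer-valued function on the vertices. -/
def lap (f : G.V → ℤ) : G.V → ℤ := fun v => ∑ w, (G.adj v w : ℤ) * (f v - f w)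

/-- The linear system `|D|` is nonempty, i.e. `D` is linearly equivalent to an
effective divisor. -/
def LinNonempty (D : G.V → ℤ) : Prop :=
  ∃ f : G.V → ℤ, G.Effective (D - G.lap f)

/-- The Baker–Norine rank of a divisor: `-1` if `|D| = ∅`, otherwise the maximal
`k` such that `|D - E| ≠ ∅` for every effective divisor `E` of degree `k`. -/
noncomputable def rank (D : G.V → ℤ) : ℤ :=
  if G.LinNonempty D then
    ((sSup {k : ℕ | ∀ E : G.V → ℤ, G.Effective E → G.deg E = (k : ℤ) →
        G.LinNonempty (D - E)} : ℕ) : ℤ)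
  else -1

/-- The divisor `n • P`. -/
def pt (P : G.V) (n : ℤ) : G.V → ℤ := fun v => if v = P then n else 0

/-- The rank Weierstrass set of `G` at `P`. -/
def Hr (P : G.V) : Set ℕ :=
  {n : ℕ | G.rank (G.pt P ((n : ℤ) - 1)) < G.rank (G.pt P (n : ℤ))}

/-- The functional Weierstrass set of `G` at `P`: pole orders at `P` of functions
with a unique pole at `P`. -/
def Hf (P : G.V) : Set ℕ :=
  {n : ℕ | ∃ f : G.V → ℤ, G.lap f P = -(n : ℤ) ∧ ∀ Q, Q ≠ P → 0 ≤ G.lap f Q}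

/-- The number of edges joining `Q` to vertices outside `A`. -/
def outdeg (A : Finset G.V) (Q : G.V) : ℕ := ∑ R ∈ Aᶜ, G.adj Q R

/-- A divisor is `P`-reduced. -/
def Reduced (P : G.V) (D : G.V → ℤ) : Prop :=
  (∀ Q, Q ≠ P → 0 ≤ D Q) ∧
  ∀ A : Finset G.V, A.Nonempty → P ∉ A → ∃ Q ∈ A, D Q < (G.outdeg A Q : ℤ)

/-- `G` is the graph `B_n` with two vertices joined by `n` parallel edges. -/
def IsBanana (n : ℕ) : Prop :=
  Fintype.card G.V = 2 ∧ ∀ u v, u ≠ v → G.adj u v = n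

/-- `G` is the complete graph on `n` vertices. -/
def IsComplete (n : ℕ) : Prop :=
  Fintype.card G.V = n ∧ ∀ u v, u ≠ v → G.adj u v = 1

/-- `G` is the complete bipartite graph with parts `A` (of size `m`) and its
complement (of size `n`). -/
def IsCompleteBipartite (A : Finset G.V) (m n : ℕ) : Prop :=
  A.card = m ∧ Aᶜ.card = n ∧
  ∀ u v, G.adj u v = if (u ∈ A ∧ v ∉ A) ∨ (u ∉ A ∧ v ∈ A) then 1 else 0

/-- `λ_Q(k)`: the least `n` with `r(nQ) = k`. -/
noncomputable def lam (Q : G.V) (k : ℕ) : ℕ :=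
  sInf {n : ℕ | G.rank (G.pt Q (n : ℤ)) = (k : ℤ)}

end Multigraph

/-- `G` is the vertex gluing of `G₁` and `G₂` identifying `P₁` and `P₂` into `P`. -/
def IsVertexGluing (G G₁ G₂ : Multigraph) (P : G.V) (P₁ : G₁.V) (P₂ : G₂.V) : Prop :=
  ∃ (ι₁ : G₁.V → G.V) (ι₂ : G₂.V → G.V),
    Function.Injective ι₁ ∧ Function.Injective ι₂ ∧
    ι₁ P₁ = P ∧ ι₂ P₂ = P ∧
    (∀ a b, ι₁ a = ι₂ b → ι₁ a = P) ∧
    (∀ v : G.V, (∃ a, ι₁ a = v) ∨ (∃ b, ι₂ b = v)) ∧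
    (∀ a b, G.adj (ι₁ a) (ι₁ b) = G₁.adj a b) ∧
    (∀ a b, G.adj (ι₂ a) (ι₂ b) = G₂.adj a b) ∧
    (∀ a b, ι₁ a ≠ P → ι₂ b ≠ P → G.adj (ι₁ a) (ι₂ b) = 0)

/-! Induction on the degree of a proof `E₀` for the rank of `D`. Take a chip of `E₀` at a
vertex `R` and put `D' = D - E₀ + R`, so `|D' - R| = ∅`; it suffices to find `Q ≠ P` with
`|D' - Q| = ∅` and recurse on `D - Q` and `E₀ - R`. Only `R = P` with `|D'| ≠ ∅` needs an
argument: the `P`-reduced representative of `D'` has no chip at `P`, and reducedness on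
`V ∖ {P}` gives a neighbour `Q` of `P` with fewer chips than edges to `P`, hence (the graph
being simple) with no chip. By the maximum principle for reduced divisors, a potential
witnessing `|D' - Q| ≠ ∅` would be maximal at `P`, hence also at `Q`, which is absurd. -/

namespace Multigraph

variable {G : Multigraph}

theorem lap_add (f g : G.V → ℤ) : G.lap (f + g) = G.lap f + G.lap g := by
  funext v
  simp only [lap, Pi.add_apply, ← Finset.sum_add_distrib]
  exact Finset.sum_congr rfl fun w _ => by ring

theorem lap_sub (f g : G.V → ℤ) : G.lap (f - g) = G.lap f - G.lap g := by
  funext v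
  simp only [lap, Pi.sub_apply, ← Finset.sum_sub_distrib]
  exact Finset.sum_congr rfl fun w _ => by ring

theorem lap_const (c : ℤ) : G.lap (fun _ => c) = 0 := by
  funext v
  simp [lap]

theorem deg_add (D E : G.V → ℤ) : G.deg (D + E) = G.deg D + G.deg E := by
  simp [deg, Finset.sum_add_distrib]

theorem deg_sub (D E : G.V → ℤ) : G.deg (D - E) = G.deg D - G.deg E := by
  simp [deg, Finset.sum_sub_distrib]

theorem deg_pt (P : G.V) (n : ℤ) : G.deg (G.pt P n) = n := by
  simp [deg, pt]

theorem deg_lap (f : G.V → ℤ) : G.deg (G.lap f) = 0 := by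
  have hswap : ∑ v, ∑ w, (G.adj v w : ℤ) * f w = ∑ v, ∑ w, (G.adj v w : ℤ) * f v := by
    rw [Finset.sum_comm]
    simp only [G.adj_symm]
  simp only [deg, lap, mul_sub, Finset.sum_sub_distrib, hswap, sub_self]

theorem effective_pt (P : G.V) {n : ℤ} (hn : 0 ≤ n) : G.Effective (G.pt P n) := by
  intro v
  unfold pt
  split_ifs <;> omega

theorem Effective.add {D E : G.V → ℤ} (hD : G.Effective D) (hE : G.Effective E) :
    G.Effective (D + E) :=
  fun v => add_nonneg (hD v) (hE v)

theorem Effective.sub_pt {E : G.V → ℤ} {R : G.V} (hE : G.Effective E) (hR : 0 < E R) :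
    G.Effective (E - G.pt R 1) := by
  intro v
  have := hE v
  simp only [Pi.sub_apply, pt]
  split_ifs with h <;> [subst h; skip] <;> omega

theorem Effective.apply_le_deg {E : G.V → ℤ} (hE : G.Effective E) (v : G.V) : E v ≤ G.deg E :=
  Finset.single_le_sum (fun w _ => hE w) (Finset.mem_univ v)

theorem Effective.deg_nonneg {E : G.V → ℤ} (hE : G.Effective E) : 0 ≤ G.deg E :=
  Finset.sum_nonneg fun v _ => hE v

theorem Effective.apply_eq_zero_of_deg_eq_zero {E : G.V → ℤ} (hE : G.Effective E)
    (hdeg : G.deg E = 0) (v : G.V) : E v = 0 :=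
  (Finset.sum_eq_zero_iff_of_nonneg fun w _ => hE w).1 hdeg v (Finset.mem_univ v)

theorem exists_pos_of_deg_pos {E : G.V → ℤ} (hdeg : 0 < G.deg E) : ∃ R, 0 < E R := by
  by_contra! h
  exact (Finset.sum_nonpos fun v _ => h v).not_gt hdeg

theorem Effective.linNonempty {D : G.V → ℤ} (hD : G.Effective D) : G.LinNonempty D :=
  ⟨0, by simpa [sub_zero, show G.lap 0 = 0 from lap_const 0] using hD⟩

theorem linNonempty_sub_lap_iff {D : G.V → ℤ} (g : G.V → ℤ) :
    G.LinNonempty (D - G.lap g) ↔ G.LinNonempty D := by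
  constructor
  · rintro ⟨f, hf⟩
    exact ⟨g + f, by rwa [lap_add, ← sub_sub]⟩
  · rintro ⟨f, hf⟩
    exact ⟨f - g, by rwa [lap_sub, sub_sub, add_sub_cancel]⟩

theorem LinNonempty.of_sub_effective {D E : G.V → ℤ} (hE : G.Effective E)
    (h : G.LinNonempty (D - E)) : G.LinNonempty D := by
  obtain ⟨f, hf⟩ := h
  exact ⟨f, fun v => by have := hf v; have := hE v; simp only [Pi.sub_apply] at *; omega⟩

theorem LinNonempty.deg_nonneg {D : G.V → ℤ} (h : G.LinNonempty D) : 0 ≤ G.deg D := by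
  obtain ⟨f, hf⟩ := h
  simpa [deg_sub, deg_lap] using hf.deg_nonneg

theorem exists_adj_ne_zero_of_mem_of_notMem {A : Finset G.V} {a b : G.V} (ha : a ∈ A)
    (hb : b ∉ A) : ∃ v ∈ A, ∃ w ∉ A, G.adj v w ≠ 0 := by
  induction G.conn a b with
  | refl => exact absurd ha hb
  | @tail c d _ hcd ih =>
    by_cases hc : c ∈ A
    · exact ⟨c, hc, d, hb, hcd⟩
    · exact ih hc

theorem outdeg_pos_of_adj_ne_zero {A : Finset G.V} {v w : G.V} (hw : w ∉ A)
    (hvw : G.adj v w ≠ 0) : 0 < G.outdeg A v :=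
  Finset.sum_pos' (fun _ _ => Nat.zero_le _) ⟨w, Finset.mem_compl.2 hw, Nat.pos_of_ne_zero hvw⟩

theorem adj_mul_sub_le_lap {f : G.V → ℤ} {v : G.V} (hv : ∀ w, f w ≤ f v) (w : G.V) :
    (G.adj v w : ℤ) * (f v - f w) ≤ G.lap f v :=
  Finset.single_le_sum (f := fun w => (G.adj v w : ℤ) * (f v - f w))
    (fun u _ => mul_nonneg (Int.natCast_nonneg _) (sub_nonneg.2 (hv u))) (Finset.mem_univ w)

theorem lap_nonneg_of_forall_le {f : G.V → ℤ} {v : G.V} (hv : ∀ w, f w ≤ f v) :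
    0 ≤ G.lap f v :=
  Finset.sum_nonneg fun w _ => mul_nonneg (Int.natCast_nonneg _) (sub_nonneg.2 (hv w))

theorem outdeg_level_le_lap {f : G.V → ℤ} {v : G.V} (hv : ∀ w, f w ≤ f v) :
    (G.outdeg (Finset.univ.filter (f · = f v)) v : ℤ) ≤ G.lap f v := by
  rw [outdeg, Finset.compl_filter, Nat.cast_sum, Finset.sum_filter]
  refine Finset.sum_le_sum fun w _ => ?_
  split_ifs with hw
  · exact mul_nonneg (Int.natCast_nonneg _) (sub_nonneg.2 (hv w))
  · have := hv w
    exact le_mul_of_one_le_right (Int.natCast_nonneg _) (by omega)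

theorem Reduced.apply_le_apply_of_lap_le {P : G.V} {D f : G.V → ℤ} (hD : G.Reduced P D)
    (hf : ∀ v, v ≠ P → G.lap f v ≤ D v) (v : G.V) : f v ≤ f P := by
  obtain ⟨m, -, hm⟩ := Finset.exists_max_image Finset.univ f Finset.univ_nonempty
  have hm : ∀ w, f w ≤ f m := fun w => hm w (Finset.mem_univ w)
  set A := Finset.univ.filter (f · = f m)
  by_cases hP : P ∈ A
  · rw [(Finset.mem_filter.1 hP).2]
    exact hm v
  obtain ⟨u, huA, hu⟩ := hD.2 A ⟨m, by simp [A]⟩ hP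
  have hfu : f u = f m := (Finset.mem_filter.1 huA).2
  have hlap : (G.outdeg A u : ℤ) ≤ G.lap f u := by
    have := outdeg_level_le_lap (hfu ▸ hm : ∀ w, f w ≤ f u)
    rwa [hfu] at this
  have := hf u (by rintro rfl; exact hP huA)
  omega

theorem reduced_zero (P : G.V) : G.Reduced P 0 := by
  refine ⟨fun _ _ => le_rfl, fun A ⟨a, ha⟩ hP => ?_⟩
  obtain ⟨v, hv, w, hw, hvw⟩ := exists_adj_ne_zero_of_mem_of_notMem ha hP
  exact ⟨v, hv, by rw [Pi.zero_apply]; exact_mod_cast outdeg_pos_of_adj_ne_zero hw hvw⟩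

theorem apply_le_apply_of_lap_eq_zero {f : G.V → ℤ} (hf : G.lap f = 0) (v w : G.V) :
    f v ≤ f w :=
  (reduced_zero w).apply_le_apply_of_lap_le (fun u _ => by simp [hf]) v

theorem eq_of_lap_eq_of_apply_eq {f g : G.V → ℤ} (h : G.lap f = G.lap g) {P : G.V}
    (hP : f P = g P) : f = g := by
  have hzero : G.lap (f - g) = 0 := by rw [lap_sub, h, sub_self]
  funext v
  have h₁ := apply_le_apply_of_lap_eq_zero hzero v P
  have h₂ := apply_le_apply_of_lap_eq_zero hzero P v
  simp only [Pi.sub_apply] at h₁ h₂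
  omega

theorem finite_setOf_effective_sub_lap (P : G.V) (D : G.V → ℤ) :
    {f : G.V → ℤ | f P = 0 ∧ G.Effective (D - G.lap f)}.Finite := by
  refine Set.Finite.of_finite_image (f := fun f => D - G.lap f)
    ((Set.finite_Icc 0 fun _ => G.deg D).subset ?_) ?_
  · rintro _ ⟨f, ⟨-, hf⟩, rfl⟩
    refine ⟨hf, fun v => ?_⟩
    simpa [deg_sub, deg_lap] using hf.apply_le_deg v
  · rintro f ⟨hfP, -⟩ g ⟨hgP, -⟩ h
    exact eq_of_lap_eq_of_apply_eq (sub_right_injective h) (hfP.trans hgP.symm)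

theorem lap_indicator_of_mem {A : Finset G.V} {v : G.V} (hv : v ∈ A) :
    G.lap (fun w => if w ∈ A then 1 else 0) v = G.outdeg A v := by
  rw [lap, outdeg, Nat.cast_sum, ← Finset.sum_add_sum_compl A,
    Finset.sum_eq_zero fun w hw => by simp [hv, hw], zero_add]
  exact Finset.sum_congr rfl fun w hw => by simp [hv, Finset.mem_compl.1 hw]

theorem lap_indicator_nonpos_of_notMem {A : Finset G.V} {v : G.V} (hv : v ∉ A) :
    G.lap (fun w => if w ∈ A then 1 else 0) v ≤ 0 :=
  Finset.sum_nonpos fun w _ => by simp only [hv, if_false]; split_ifs <;> simp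

/-- Among the finitely many potentials `f` with `f P = 0` and `D - Δf` effective, one maximising
`∑ f` is `P`-reduced: firing an offending set would increase `∑ f`. -/
theorem exists_effective_reduced (P : G.V) {D : G.V → ℤ} (hD : G.LinNonempty D) :
    ∃ g, G.Effective (D - G.lap g) ∧ G.Reduced P (D - G.lap g) := by
  set S := {f : G.V → ℤ | f P = 0 ∧ G.Effective (D - G.lap f)}
  have hS : S.Nonempty := by
    obtain ⟨f, hf⟩ := hD
    exact ⟨f - fun _ => f P, by simp, by rwa [lap_sub, lap_const, sub_zero]⟩
  obtain ⟨g, ⟨hgP, hg⟩, hmax⟩ :=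
    Set.exists_max_image S (fun f => ∑ v, f v) (finite_setOf_effective_sub_lap P D) hS
  refine ⟨g, hg, fun v _ => hg v, fun A hA hPA => ?_⟩
  by_contra! hfire
  set χ : G.V → ℤ := fun w => if w ∈ A then 1 else 0
  have hfired : g + χ ∈ S := by
    refine ⟨by simp [χ, hgP, hPA], fun v => ?_⟩
    rw [lap_add, ← sub_sub, Pi.sub_apply, sub_nonneg]
    by_cases hv : v ∈ A
    · exact (lap_indicator_of_mem hv).trans_le (hfire v hv)
    · exact (lap_indicator_nonpos_of_notMem hv).trans (hg v)
  have hsum := hmax _ hfired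
  simp only [Pi.add_apply, Finset.sum_add_distrib, χ, Finset.sum_boole, Finset.filter_mem_eq_inter,
    Finset.univ_inter] at hsum
  have := hA.card_pos
  omega

theorem Reduced.not_linNonempty_sub_pt {P Q : G.V} {D : G.V → ℤ} (hD : G.Reduced P D)
    (hP : D P = 0) (hQ : D Q = 0) (hPQ : 0 < G.adj P Q) : ¬ G.LinNonempty (D - G.pt Q 1) := by
  have hQP : Q ≠ P := by rintro rfl; simp [G.adj_loopless] at hPQ
  rintro ⟨f, hf⟩
  have hf' : ∀ v, G.lap f v ≤ D v - G.pt Q 1 v := fun v => by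
    have := hf v
    simp only [Pi.sub_apply] at this
    omega
  have hmax := hD.apply_le_apply_of_lap_le fun v _ =>
    (hf' v).trans (by simp only [pt]; split_ifs <;> omega)
  -- `Δf(P) ≤ D(P) = 0` forces `f(Q) = f(P)`, so `Q` is a maximum of `f` too
  have hfQ : f P ≤ f Q := by
    have h₁ := adj_mul_sub_le_lap hmax Q
    have h₂ := hf' P
    simp only [pt, if_neg hQP.symm, hP] at h₂
    nlinarith
  have h₁ := lap_nonneg_of_forall_le fun v => (hmax v).trans hfQ
  have h₂ := hf' Q
  simp only [pt, if_pos, hQ] at h₂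
  omega

theorem Reduced.exists_ne_not_linNonempty_sub_pt (hG : G.Simple) {P : G.V} {D : G.V → ℤ}
    (hD : G.Reduced P D) (hDeff : G.Effective D) (hP : ¬ G.LinNonempty (D - G.pt P 1)) :
    ∃ Q, Q ≠ P ∧ ¬ G.LinNonempty (D - G.pt Q 1) := by
  have hDP : D P = 0 := by
    by_contra hne
    refine hP (Effective.linNonempty fun v => ?_)
    have := hDeff v
    simp only [Pi.sub_apply, pt]
    split_ifs with h <;> [subst h; skip] <;> omega
  obtain ⟨b, hb⟩ := Fintype.exists_ne_of_one_lt_card hG.2 P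
  obtain ⟨Q, hQ, hDQ⟩ := hD.2 {P}ᶜ ⟨b, by simpa using hb⟩ (by simp)
  have hQP : Q ≠ P := by simpa using hQ
  have hout : G.outdeg {P}ᶜ Q = G.adj P Q := by simp [outdeg, G.adj_symm]
  have := hG.1 P Q
  have := hDeff Q
  rw [hout] at hDQ
  exact ⟨Q, hQP, hD.not_linNonempty_sub_pt hDP (by omega) (by omega)⟩

theorem exists_ne_not_linNonempty_sub_pt (hG : G.Simple) (P : G.V) {R : G.V} {D : G.V → ℤ}
    (hR : ¬ G.LinNonempty (D - G.pt R 1)) :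
    ∃ Q, Q ≠ P ∧ ¬ G.LinNonempty (D - G.pt Q 1) := by
  by_cases hRP : R = P
  swap
  · exact ⟨R, hRP, hR⟩
  subst hRP
  by_cases hD : G.LinNonempty D
  · obtain ⟨g, hgeff, hgred⟩ := exists_effective_reduced R hD
    simp only [← linNonempty_sub_lap_iff (D := D - G.pt _ 1) g, sub_right_comm D] at hR ⊢
    exact hgred.exists_ne_not_linNonempty_sub_pt hG hgeff hR
  · obtain ⟨Q, hQ⟩ := Fintype.exists_ne_of_one_lt_card hG.2 R
    exact ⟨Q, hQ, fun h => hD (h.of_sub_effective (effective_pt Q zero_le_one))⟩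

theorem exists_apply_eq_zero_of_not_linNonempty_sub (hG : G.Simple) (P : G.V)
    {D E₀ : G.V → ℤ} (hE₀ : G.Effective E₀) (hD : ¬ G.LinNonempty (D - E₀)) :
    ∃ E, G.Effective E ∧ G.deg E = G.deg E₀ ∧ E P = 0 ∧ ¬ G.LinNonempty (D - E) := by
  obtain ⟨n, hn⟩ := Int.eq_ofNat_of_zero_le hE₀.deg_nonneg
  induction n generalizing D E₀ with
  | zero => exact ⟨E₀, hE₀, rfl, hE₀.apply_eq_zero_of_deg_eq_zero hn P, hD⟩
  | succ n ih =>
    obtain ⟨R, hR⟩ := exists_pos_of_deg_pos (E := E₀) (by omega)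
    set E₁ := E₀ - G.pt R 1
    have hdeg₁ : G.deg E₁ = n := by rw [deg_sub, deg_pt, hn]; push_cast; ring
    obtain ⟨Q, hQP, hQ⟩ := exists_ne_not_linNonempty_sub_pt hG P (D := D - E₁) (R := R)
      (by rwa [sub_sub, sub_add_cancel])
    obtain ⟨F, hF, hdegF, hFP, hDF⟩ :=
      ih (D := D - G.pt Q 1) (hE₀.sub_pt hR) (by rwa [sub_right_comm]) hdeg₁
    refine ⟨F + G.pt Q 1, hF.add (effective_pt Q zero_le_one), ?_, ?_,
      by rwa [add_comm, ← sub_sub]⟩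
    · rw [deg_add, deg_pt, hdegF, hdeg₁, hn]
      push_cast
      ring
    · simp [pt, hFP, hQP.symm]

theorem exists_effective_deg_eq_rank_add_one (D : G.V → ℤ) :
    ∃ E, G.Effective E ∧ G.deg E = G.rank D + 1 ∧ ¬ G.LinNonempty (D - E) := by
  by_cases hD : G.LinNonempty D
  · set S := {k : ℕ | ∀ E : G.V → ℤ, G.Effective E → G.deg E = (k : ℤ) →
        G.LinNonempty (D - E)}
    obtain ⟨P⟩ := G.nonemptyV
    have hbdd : BddAbove S := by
      refine ⟨(G.deg D).toNat, fun k hk => ?_⟩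
      have := (hk _ (effective_pt P k.cast_nonneg) (deg_pt P k)).deg_nonneg
      rw [deg_sub, deg_pt] at this
      omega
    have hnot : sSup S + 1 ∉ S := fun h => by
      have := le_csSup hbdd h
      omega
    simp only [S, Set.mem_ofPred_eq, not_forall] at hnot
    obtain ⟨E, hE, hdeg, hDE⟩ := hnot
    exact ⟨E, hE, by rw [rank, if_pos hD, hdeg]; push_cast; rfl, hDE⟩
  · exact ⟨0, fun _ => le_rfl, by simp [rank, hD, deg], by simpa using hD⟩

end Multigraph

/-- On a simple graph, every divisor has a proof for its rank not supported at a
given vertex `P`. -/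
theorem exists_proof_avoiding_vertex (G : Multigraph) (hG : G.Simple)
    (D : G.V → ℤ) (P : G.V) :
    ∃ E : G.V → ℤ, G.Effective E ∧ G.deg E = G.rank D + 1 ∧ E P = 0 ∧
      ¬ G.LinNonempty (D - E) := by
  obtain ⟨E₀, hE₀, hdeg, hD⟩ := G.exists_effective_deg_eq_rank_add_one D
  obtain ⟨E, hE, hdegE, hEP, hDE⟩ := G.exists_apply_eq_zero_of_not_linNonempty_sub hG P hE₀ hD
  exact ⟨E, hE, hdegE.trans hdeg, hEP, hDE⟩
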